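/- Let X be a proper δ-hyperbolic geodesic space, x ∈ X, and C ⊆ ∂X with at least two points. Then for every z ∈ C and every geodesic ray ξ_{xz} from x to z there exists a geodesic line γ with both endpoints in C such that d(ξ_{xz}(t), γ(t)) ≤ 22δ + d(x, QC-Hull(C)) for every t ≥ 0. -/
import Mathlib


open Filter

noncomputable def gromovProd {X : Type*} [MetricSpace X] (x y z : X) : ℝ :=
  (dist x y + dist x z - dist y z) / 2

def IsDeltaHyperbolic (X : Type*) [MetricSpace X] (δ : ℝ) : Prop :=
  ∀ x y z w : X, min (gromovProd w x y) (gromovProd w y z) - δ ≤ gromovProd w x z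

def IsGeodesicSpace (X : Type*) [MetricSpace X] : Prop :=
  ∀ x y : X, ∃ c : ℝ → X, c 0 = x ∧ c (dist x y) = y ∧
    ∀ s ∈ Set.Icc (0 : ℝ) (dist x y), ∀ t ∈ Set.Icc (0 : ℝ) (dist x y),
      dist (c s) (c t) = |s - t|

def SeqEquiv {X : Type*} [MetricSpace X] (x : X) (u v : ℕ → X) : Prop :=
  Tendsto (fun p : ℕ × ℕ => gromovProd x (u p.1) (v p.2)) atTop atTop

def GromovSeq {X : Type*} [MetricSpace X] (x : X) (u : ℕ → X) : Prop := SeqEquiv x u u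

def IsGeodLine {X : Type*} [MetricSpace X] (γ : ℝ → X) : Prop :=
  ∀ s t : ℝ, dist (γ s) (γ t) = |s - t|

def IsRay {X : Type*} [MetricSpace X] (x : X) (ξ : ℝ → X) : Prop :=
  ξ 0 = x ∧ ∀ s t : ℝ, 0 ≤ s → 0 ≤ t → dist (ξ s) (ξ t) = |s - t|

/-- The line `γ` has both endpoints in the boundary set `C` (a set of Gromov
sequences based at `x₀`). -/
def EndsIn {X : Type*} [MetricSpace X] (x₀ : X) (C : Set (ℕ → X)) (γ : ℝ → X) : Prop :=
  (∃ u ∈ C, SeqEquiv x₀ (fun n => γ n) u) ∧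
  (∃ u ∈ C, SeqEquiv x₀ (fun n => γ (-(n : ℝ))) u)

/-- The quasiconvex hull of `C ⊆ ∂X`. -/
def qcHull {X : Type*} [MetricSpace X] (x₀ : X) (C : Set (ℕ → X)) : Set X :=
  {p | ∃ γ : ℝ → X, IsGeodLine γ ∧ EndsIn x₀ C γ ∧ p ∈ Set.range γ}

section Aux
variable {X : Type*} [MetricSpace X]

theorem gromovProd_nonneg (x y z : X) : 0 ≤ gromovProd x y z := by
  have := dist_triangle y x z
  unfold gromovProd
  rw [dist_comm y x] at this
  linarith

theorem gromovProd_comm (x y z : X) : gromovProd x y z = gromovProd x z y := by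
  unfold gromovProd; rw [dist_comm y z]; ring

theorem gromovProd_le_left (x y z : X) : gromovProd x y z ≤ dist x y := by
  have := dist_triangle x y z
  unfold gromovProd
  linarith

theorem gromovProd_le_of_between (x p q y : X) (h : dist p y + dist y q = dist p q) :
    gromovProd x p q ≤ dist x y := by
  have h1 := dist_triangle x y p
  have h2 := dist_triangle x y q
  unfold gromovProd
  rw [dist_comm y p] at h1
  linarith

theorem gromovProd_of_between (x y q : X) (h : dist x y + dist y q = dist x q) :
    gromovProd x y q = dist x y := by
  unfold gromovProd; linarith

theorem gromovProd_sub_le (x a a' b : X) :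
    gromovProd x a b - gromovProd x a' b ≤ dist a a' := by
  have h1 : |dist a x - dist a' x| ≤ dist a a' := abs_dist_sub_le _ _ _
  rw [dist_comm a x, dist_comm a' x] at h1
  have h2 : |dist a b - dist a' b| ≤ dist a a' := abs_dist_sub_le _ _ _
  rw [abs_le] at h1 h2
  unfold gromovProd
  linarith [h1.1, h1.2, h2.1, h2.2]

theorem seqEquiv_iff {x : X} {u v : ℕ → X} :
    SeqEquiv x u v ↔
      ∀ M : ℝ, ∃ N : ℕ, ∀ n m : ℕ, N ≤ n → N ≤ m → M ≤ gromovProd x (u n) (v m) := by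
  rw [SeqEquiv, tendsto_atTop]
  constructor
  · intro h M
    have := h M
    rw [eventually_atTop] at this
    obtain ⟨a, ha⟩ := this
    exact ⟨max a.1 a.2, fun n m hn hm =>
      ha (n, m) ⟨le_trans (le_max_left _ _) hn, le_trans (le_max_right _ _) hm⟩⟩
  · intro h M
    obtain ⟨N, hN⟩ := h M
    rw [eventually_atTop]
    exact ⟨(N, N), fun p hp => hN p.1 p.2 hp.1 hp.2⟩

theorem seqEquiv_symm {x : X} {u v : ℕ → X} (h : SeqEquiv x u v) : SeqEquiv x v u := by
  rw [seqEquiv_iff] at h ⊢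
  intro M; obtain ⟨N, hN⟩ := h M
  exact ⟨N, fun n m hn hm => by rw [gromovProd_comm]; exact hN m n hm hn⟩

theorem seqEquiv_trans {δ : ℝ} (hyp : IsDeltaHyperbolic X δ) {x : X} {a b c : ℕ → X}
    (h1 : SeqEquiv x a b) (h2 : SeqEquiv x b c) : SeqEquiv x a c := by
  rw [seqEquiv_iff] at h1 h2 ⊢
  intro M
  obtain ⟨N1, hN1⟩ := h1 (M + δ)
  obtain ⟨N2, hN2⟩ := h2 (M + δ)
  refine ⟨max N1 N2, fun n m hn hm => ?_⟩
  have h := hyp (a n) (b (max N1 N2)) (c m) x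
  have e1 := hN1 n (max N1 N2) (le_trans (le_max_left _ _) hn) (le_max_left _ _)
  have e2 := hN2 (max N1 N2) m (le_max_right _ _) (le_trans (le_max_right _ _) hm)
  have e3 : M + δ ≤ min (gromovProd x (a n) (b (max N1 N2)))
      (gromovProd x (b (max N1 N2)) (c m)) := le_min e1 e2
  linarith

theorem ray_dist (x : X) (ξ : ℝ → X) (hξ : IsRay x ξ) {t : ℝ} (ht : 0 ≤ t) :
    dist x (ξ t) = t := by
  have := hξ.2 0 t le_rfl ht
  rw [hξ.1] at this
  rw [this, abs_of_nonpos (by linarith), neg_sub, sub_zero]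

theorem ray_gromovSeq (x : X) (ξ : ℝ → X) (hξ : IsRay x ξ) :
    GromovSeq x (fun n : ℕ => ξ n) := by
  rw [GromovSeq, seqEquiv_iff]
  intro M
  refine ⟨⌈M⌉₊, fun n m hn hm => ?_⟩
  have d1 : dist x (ξ (n : ℝ)) = n := ray_dist x ξ hξ (Nat.cast_nonneg n)
  have d2 : dist x (ξ (m : ℝ)) = m := ray_dist x ξ hξ (Nat.cast_nonneg m)
  have d3 : dist (ξ (n : ℝ)) (ξ (m : ℝ)) = |(n : ℝ) - m| :=
    hξ.2 _ _ (Nat.cast_nonneg n) (Nat.cast_nonneg m)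
  have hM : M ≤ (n : ℝ) := le_trans (Nat.le_ceil M) (Nat.cast_le.2 hn)
  have hM' : M ≤ (m : ℝ) := le_trans (Nat.le_ceil M) (Nat.cast_le.2 hm)
  unfold gromovProd
  rw [d1, d2, d3]
  rcases abs_cases ((n : ℝ) - m) with ⟨h, _⟩ | ⟨h, _⟩ <;> rw [h] <;> linarith

/-- The forward-end sequence of a geodesic line is a Gromov sequence. -/
theorem line_fwd_gromovSeq (x : X) (γ : ℝ → X) (hγ : IsGeodLine γ) :
    GromovSeq x (fun n : ℕ => γ n) := by
  rw [GromovSeq, seqEquiv_iff]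
  intro M
  refine ⟨⌈M + dist x (γ 0)⌉₊, fun n m hn hm => ?_⟩
  have d1 : dist (γ (0:ℝ)) (γ (n:ℝ)) = n := by
    rw [hγ 0 n, abs_of_nonpos (sub_nonpos.mpr (Nat.cast_nonneg _) : (0:ℝ) - n ≤ 0)]; ring_nf
  have d2 : dist (γ (0:ℝ)) (γ (m:ℝ)) = m := by
    rw [hγ 0 m, abs_of_nonpos (sub_nonpos.mpr (Nat.cast_nonneg _) : (0:ℝ) - m ≤ 0)]; ring_nf
  have t1 : (n : ℝ) - dist x (γ 0) ≤ dist x (γ (n:ℝ)) := by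
    have := dist_triangle (γ (0:ℝ)) x (γ (n:ℝ))
    rw [dist_comm (γ (0:ℝ)) x] at this
    linarith
  have t2 : (m : ℝ) - dist x (γ 0) ≤ dist x (γ (m:ℝ)) := by
    have := dist_triangle (γ (0:ℝ)) x (γ (m:ℝ))
    rw [dist_comm (γ (0:ℝ)) x] at this
    linarith
  have d3 : dist (γ (n:ℝ)) (γ (m:ℝ)) = |(n : ℝ) - m| := hγ _ _
  have hM : M + dist x (γ 0) ≤ (n : ℝ) := le_trans (Nat.le_ceil _) (Nat.cast_le.2 hn)
  have hM' : M + dist x (γ 0) ≤ (m : ℝ) := le_trans (Nat.le_ceil _) (Nat.cast_le.2 hm)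
  unfold gromovProd
  rw [d3]
  rcases abs_cases ((n : ℝ) - m) with ⟨h, _⟩ | ⟨h, _⟩ <;> rw [h] <;> linarith

theorem line_rev (γ : ℝ → X) (hγ : IsGeodLine γ) : IsGeodLine (fun t => γ (-t)) := by
  intro s t
  rw [hγ (-s) (-t)]
  rw [show -s - -t = -(s - t) by ring, abs_neg]

theorem line_ends_not_equiv (x : X) (γ : ℝ → X) (hγ : IsGeodLine γ) :
    ¬ SeqEquiv x (fun n : ℕ => γ n) (fun n : ℕ => γ (-(n : ℝ))) := by
  intro h
  rw [seqEquiv_iff] at h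
  obtain ⟨N, hN⟩ := h (dist x (γ 0) + 1)
  have e := hN N N le_rfl le_rfl
  have d1 : dist x (γ (N:ℝ)) ≤ dist x (γ 0) + N := by
    have h0 : dist (γ (0:ℝ)) (γ (N:ℝ)) = N := by
      rw [hγ 0 N, abs_of_nonpos (sub_nonpos.mpr (Nat.cast_nonneg _) : (0:ℝ) - N ≤ 0)]; ring_nf
    have := dist_triangle x (γ (0:ℝ)) (γ (N:ℝ))
    linarith
  have d2 : dist x (γ (-(N:ℝ))) ≤ dist x (γ 0) + N := by
    have h0 : dist (γ (0:ℝ)) (γ (-(N:ℝ))) = N := by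
      rw [hγ 0 (-(N:ℝ)), show (0:ℝ) - -(N:ℝ) = N by ring, abs_of_nonneg (Nat.cast_nonneg N)]
    have := dist_triangle x (γ (0:ℝ)) (γ (-(N:ℝ)))
    linarith
  have d3 : dist (γ (N:ℝ)) (γ (-(N:ℝ))) = N + N := by
    rw [hγ (N:ℝ) (-(N:ℝ)), show (N:ℝ) - -(N:ℝ) = N + N by ring,
      abs_of_nonneg (by positivity)]
  have : gromovProd x (γ (N:ℝ)) (γ (-(N:ℝ))) ≤ dist x (γ 0) := by
    unfold gromovProd; rw [d3]; linarith
  linarith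

/-- Set of `c` such that the Gromov products are frequently `≤ c`. -/
def LowSet (x : X) (u v : ℕ → X) : Set ℝ :=
  {c | ∀ N : ℕ, ∃ n m : ℕ, N ≤ n ∧ N ≤ m ∧ gromovProd x (u n) (v m) ≤ c}

noncomputable def ell (x : X) (u v : ℕ → X) : ℝ := sInf (LowSet x u v)

theorem lowSet_nonempty {x : X} {u v : ℕ → X} (h : ¬ SeqEquiv x u v) :
    (LowSet x u v).Nonempty := by
  rw [seqEquiv_iff] at h
  push_neg at h
  obtain ⟨M, hM⟩ := h
  exact ⟨M, fun N => by
    obtain ⟨n, m, hn, hm, hp⟩ := hM N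
    exact ⟨n, m, hn, hm, le_of_lt hp⟩⟩

theorem lowSet_bddBelow (x : X) (u v : ℕ → X) : BddBelow (LowSet x u v) := by
  refine ⟨0, fun c hc => ?_⟩
  obtain ⟨n, m, _, _, hp⟩ := hc 0
  exact le_trans (gromovProd_nonneg x (u n) (v m)) hp

theorem ell_nonneg {x : X} {u v : ℕ → X} (h : ¬ SeqEquiv x u v) : 0 ≤ ell x u v :=
  le_csInf (lowSet_nonempty h) fun c hc => by
    obtain ⟨n, m, _, _, hp⟩ := hc 0
    exact le_trans (gromovProd_nonneg x (u n) (v m)) hp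

theorem ell_le {x : X} {u v : ℕ → X} {c : ℝ} (hc : c ∈ LowSet x u v) : ell x u v ≤ c :=
  csInf_le (lowSet_bddBelow x u v) hc

theorem lowSet_mono {x : X} {u v : ℕ → X} {c c' : ℝ} (h : c ≤ c') (hc : c ∈ LowSet x u v) :
    c' ∈ LowSet x u v := fun N => by
  obtain ⟨n, m, hn, hm, hp⟩ := hc N
  exact ⟨n, m, hn, hm, le_trans hp h⟩

/-- `ell + ε` is in the low set. -/
theorem lowSet_ell_add {x : X} {u v : ℕ → X} (h : ¬ SeqEquiv x u v) {ε : ℝ} (hε : 0 < ε) :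
    ell x u v + ε ∈ LowSet x u v := by
  obtain ⟨c, hc, hlt⟩ := Real.lt_sInf_add_pos (lowSet_nonempty h) hε
  exact lowSet_mono (le_of_lt hlt) hc

/-- Below `ell`, products are eventually large. -/
theorem high_of_lt_ell {x : X} {u v : ℕ → X} {c : ℝ} (h : c < ell x u v) :
    ∃ N : ℕ, ∀ n m : ℕ, N ≤ n → N ≤ m → c < gromovProd x (u n) (v m) := by
  by_contra hcon
  push_neg at hcon
  have : c ∈ LowSet x u v := fun N => by
    obtain ⟨n, m, hn, hm, hp⟩ := hcon N
    exact ⟨n, m, hn, hm, hp⟩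
  exact absurd (ell_le this) (not_le.2 h)

/-- Two points at equal distance `s` from the common endpoint `Q` of two geodesics
`[x,Q]` and `[P,Q]` are `4δ`-close, provided `s ≤ (x|P)_Q`. -/
theorem fellow_travel {δ : ℝ} (hδ : 0 ≤ δ) (hyp : IsDeltaHyperbolic X δ)
    (Q x P A B : X) (s : ℝ)
    (hA1 : dist x A + dist A Q = dist x Q) (hA2 : dist A Q = s)
    (hB1 : dist P B + dist B Q = dist P Q) (hB2 : dist B Q = s)
    (hs : s ≤ gromovProd Q x P) :
    dist A B ≤ 4 * δ := by
  have cQA : dist Q A = s := by rw [dist_comm]; exact hA2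
  have cQB : dist Q B = s := by rw [dist_comm]; exact hB2
  have cAx : dist A x = dist x Q - s := by rw [dist_comm]; linarith
  have cBP : dist B P = dist P Q - s := by rw [dist_comm]; linarith
  have pA : gromovProd Q A x = s := by
    unfold gromovProd; rw [cQA, cAx, dist_comm Q x]; ring
  have pB : gromovProd Q P B = s := by
    unfold gromovProd; rw [cQB, dist_comm P B, cBP, dist_comm Q P]; ring
  have h1 := hyp x P B Q
  have h2 := hyp A x B Q
  have m1 : s ≤ min (gromovProd Q x P) (gromovProd Q P B) := le_min hs (le_of_eq pB.symm)
  have hxB : s - δ ≤ gromovProd Q x B := by linarith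
  have m2 : s - δ ≤ min (gromovProd Q A x) (gromovProd Q x B) :=
    le_min (by linarith [pA]) hxB
  have hAB : s - 2 * δ ≤ gromovProd Q A B := by linarith
  have : gromovProd Q A B = (s + s - dist A B) / 2 := by
    unfold gromovProd; rw [cQA, cQB]
  linarith [this ▸ hAB]

theorem gromovSeq_dist_ge {x : X} {v : ℕ → X} (hv : GromovSeq x v) :
    ∀ M : ℝ, ∃ N : ℕ, ∀ q : ℕ, N ≤ q → M ≤ dist x (v q) := by
  intro M
  obtain ⟨N, hN⟩ := seqEquiv_iff.1 hv M
  refine ⟨N, fun q hq => le_trans (hN q q hq hq) ?_⟩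
  have h : dist x (v q) + dist (v q) (v q) = dist x (v q) := by simp
  exact le_of_eq (gromovProd_of_between x (v q) (v q) h)

end Aux

section Construction
open Topology
variable {Y : Type*} [MetricSpace Y] [ProperSpace Y]

theorem line_construction {δ : ℝ} (hδ : 0 ≤ δ) (hyp : IsDeltaHyperbolic Y δ)
    (hgeo : IsGeodesicSpace Y)
    (x : Y) (ξ : ℝ → Y) (hξ : IsRay x ξ) (v : ℕ → Y) (hv : GromovSeq x v)
    (hnot : ¬ SeqEquiv x (fun n : ℕ => ξ n) v) :
    ∃ γ : ℝ → Y, IsGeodLine γ ∧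
      SeqEquiv x (fun n : ℕ => γ n) (fun n : ℕ => ξ n) ∧
      SeqEquiv x (fun n : ℕ => γ (-(n : ℝ))) v ∧
      ∀ t : ℝ, 0 ≤ t → dist (ξ t) (γ t) ≤ ell x (fun n : ℕ => ξ n) v + 4 * δ := by
  have hr0 : 0 ≤ ell x (fun n : ℕ => ξ n) v := ell_nonneg hnot
  generalize hrdef : ell x (fun n : ℕ => ξ n) v = r at hr0 ⊢
  have hfar := gromovSeq_dist_ge hv
  have hsel : ∀ k : ℕ, ∃ Tn mn : ℕ, k ≤ Tn ∧ k ≤ mn ∧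
      gromovProd x (ξ Tn) (v mn) ≤ r + 1/(k+1) ∧ (k : ℝ) + r + 1 ≤ dist x (v mn) := by
    intro k
    obtain ⟨N₀, hN₀⟩ := hfar ((k : ℝ) + r + 1)
    have hmem := lowSet_ell_add hnot (by positivity : (0:ℝ) < 1/(k+1))
    rw [hrdef] at hmem
    obtain ⟨n, m, hn, hm, hp⟩ := hmem (max k N₀)
    exact ⟨n, m, le_trans (le_max_left _ _) hn, le_trans (le_max_left _ _) hm, hp,
      hN₀ m (le_trans (le_max_right _ _) hm)⟩
  choose T mm hkT hkm hprod hdist using hsel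
  have hgc : ∀ k : ℕ, ∃ c : ℝ → Y,
      c 0 = v (mm k) ∧ c (dist (v (mm k)) (ξ (T k))) = ξ (T k) ∧
      ∀ s ∈ Set.Icc (0:ℝ) (dist (v (mm k)) (ξ (T k))),
        ∀ t ∈ Set.Icc (0:ℝ) (dist (v (mm k)) (ξ (T k))),
          dist (c s) (c t) = |s - t| := fun k => hgeo (v (mm k)) (ξ (T k))
  choose c hc0 hcL hciso using hgc
  obtain ⟨Rk, hRk⟩ : ∃ Rk : ℕ → ℝ, ∀ k, Rk k = gromovProd x (v (mm k)) (ξ (T k : ℕ)) :=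
    ⟨_, fun _ => rfl⟩
  obtain ⟨Ak, hAk⟩ : ∃ Ak : ℕ → ℝ, ∀ k, Ak k = dist x (v (mm k)) - Rk k :=
    ⟨_, fun _ => rfl⟩
  obtain ⟨Bk, hBk⟩ : ∃ Bk : ℕ → ℝ, ∀ k, Bk k = (T k : ℝ) - Rk k := ⟨_, fun _ => rfl⟩
  obtain ⟨Lk, hLk⟩ : ∃ Lk : ℕ → ℝ, ∀ k, Lk k = dist (v (mm k)) (ξ (T k : ℕ)) :=
    ⟨_, fun _ => rfl⟩
  have hQd : ∀ k : ℕ, dist x (ξ (T k : ℕ)) = (T k : ℝ) :=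
    fun k => ray_dist x ξ hξ (Nat.cast_nonneg _)
  have hRk0 : ∀ k : ℕ, 0 ≤ Rk k := fun k => (hRk k) ▸ gromovProd_nonneg _ _ _
  have hRkr : ∀ k : ℕ, Rk k ≤ r + 1/(k+1) := fun k => by
    rw [hRk k, gromovProd_comm]; exact hprod k
  have hfrac : ∀ k : ℕ, 1/((k:ℝ)+1) ≤ 1 := by
    intro k
    rw [div_le_one (by positivity)]
    linarith [Nat.cast_nonneg (α := ℝ) k]
  have hRkr1 : ∀ k : ℕ, Rk k ≤ r + 1 := fun k => le_trans (hRkr k) (by linarith [hfrac k])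
  have hAkk : ∀ k : ℕ, (k : ℝ) ≤ Ak k := by
    intro k
    have h1 := hdist k
    have h2 := hRkr1 k
    rw [hAk k]
    linarith
  have hAk0 : ∀ k : ℕ, 0 ≤ Ak k := fun k => le_trans (Nat.cast_nonneg k) (hAkk k)
  have hRkT : ∀ k : ℕ, Rk k ≤ (T k : ℝ) := by
    intro k
    have h := gromovProd_le_left x (ξ (T k : ℕ)) (v (mm k))
    rw [hQd k] at h
    rw [hRk k, gromovProd_comm]
    exact h
  have hBk0 : ∀ k : ℕ, 0 ≤ Bk k := fun k => by rw [hBk k]; linarith [hRkT k]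
  have hBkk : ∀ k : ℕ, (k : ℝ) - r - 1 ≤ Bk k := by
    intro k
    have h1 : (k : ℝ) ≤ (T k : ℝ) := Nat.cast_le.2 (hkT k)
    have h2 := hRkr1 k
    rw [hBk k]; linarith
  have hLsum : ∀ k : ℕ, Lk k = Ak k + Bk k := by
    intro k
    have h : Rk k = (dist x (v (mm k)) + dist x (ξ (T k : ℕ)) - Lk k)/2 := by
      rw [hRk k, hLk k]; rfl
    rw [hQd k] at h
    rw [hAk k, hBk k]; linarith
  have hLk0 : ∀ k : ℕ, 0 ≤ Lk k := fun k => (hLk k) ▸ dist_nonneg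
  have E1 : ∀ k : ℕ, ∀ s : ℝ, 0 ≤ s → s ≤ Bk k →
      dist (ξ (s + Rk k)) (c k (s + Ak k)) ≤ 4 * δ := by
    intro k s hs0 hsB
    have hw0 : 0 ≤ s + Ak k := by linarith [hAk0 k]
    have hwL : s + Ak k ≤ Lk k := by rw [hLsum k]; linarith
    have hsR : 0 ≤ s + Rk k := by linarith [hRk0 k]
    have hsRT : s + Rk k ≤ (T k : ℝ) := by
      rw [hBk k] at hsB; linarith
    have d1 : dist x (ξ (s + Rk k)) = s + Rk k := ray_dist x ξ hξ hsR
    have d2 : dist (ξ (s + Rk k)) (ξ (T k : ℕ)) = (T k : ℝ) - (s + Rk k) := by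
      rw [hξ.2 (s + Rk k) (T k : ℕ) hsR (Nat.cast_nonneg _),
        abs_of_nonpos (by linarith)]
      ring
    have hwL' : s + Ak k ≤ dist (v (mm k)) (ξ (T k : ℕ)) := by rw [← hLk k]; exact hwL
    have hL0' : (0:ℝ) ≤ dist (v (mm k)) (ξ (T k : ℕ)) := dist_nonneg
    have dc1 : dist (v (mm k)) (c k (s + Ak k)) = s + Ak k := by
      rw [← hc0 k,
        hciso k 0 ⟨le_rfl, hL0'⟩ (s + Ak k) ⟨hw0, hwL'⟩,
        abs_of_nonpos (by linarith)]
      ring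
    have dc2 : dist (c k (s + Ak k)) (ξ (T k : ℕ)) = Bk k - s := by
      conv_lhs => rw [← hcL k]
      rw [hciso k (s + Ak k) ⟨hw0, hwL'⟩ (dist (v (mm k)) (ξ (T k : ℕ)))
        ⟨hL0', le_rfl⟩, ← hLk k, abs_of_nonpos (by linarith), hLsum k]
      ring
    have hgp : gromovProd (ξ (T k : ℕ)) x (v (mm k)) = Bk k := by
      unfold gromovProd
      rw [dist_comm (ξ (T k : ℕ)) x, hQd k, dist_comm (ξ (T k : ℕ)) (v (mm k)),
        ← hLk k, hLsum k]
      have hdx : dist x (v (mm k)) = Ak k + Rk k := by rw [hAk k]; ring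
      rw [hdx, hBk k]
      ring
    apply fellow_travel hδ hyp (ξ (T k : ℕ)) x (v (mm k)) (ξ (s + Rk k)) (c k (s + Ak k))
      (Bk k - s)
    · rw [d1, d2, hQd k]; ring
    · rw [d2, hBk k]; ring
    · rw [dc1, dc2, ← hLk k, hLsum k]; ring
    · exact dc2
    · rw [hgp]; linarith
  have E0 : ∀ k : ℕ, dist x (c k (Ak k)) ≤ Rk k + 4 * δ := by
    intro k
    have h := E1 k 0 le_rfl (hBk0 k)
    rw [zero_add, zero_add] at h
    have d1 : dist x (ξ (Rk k)) = Rk k := ray_dist x ξ hξ (hRk0 k)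
    calc dist x (c k (Ak k)) ≤ dist x (ξ (Rk k)) + dist (ξ (Rk k)) (c k (Ak k)) :=
          dist_triangle _ _ _
      _ ≤ Rk k + 4 * δ := by rw [d1]; linarith
  obtain ⟨σ, hσdef⟩ : ∃ σ : ℕ → ℝ → Y,
      ∀ k t, σ k t = c k (max 0 (min (t + Ak k) (Lk k))) := ⟨_, fun _ _ => rfl⟩
  have hσin : ∀ k : ℕ, ∀ t : ℝ, -Ak k ≤ t → t ≤ Bk k → σ k t = c k (t + Ak k) := by
    intro k t h1 h2
    rw [hσdef k t, min_eq_left (by rw [hLsum k]; linarith), max_eq_right (by linarith)]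
  have hmemIcc : ∀ k : ℕ, ∀ t : ℝ, -Ak k ≤ t → t ≤ Bk k →
      t + Ak k ∈ Set.Icc (0:ℝ) (dist (v (mm k)) (ξ (T k : ℕ))) := by
    intro k t h1 h2
    refine ⟨by linarith, ?_⟩
    rw [← hLk k, hLsum k]; linarith
  have hdom : ∀ t : ℝ, ∀ᶠ k in atTop, -Ak k ≤ t ∧ t ≤ Bk k := by
    intro t
    rw [eventually_atTop]
    refine ⟨⌈|t| + r + 1⌉₊, fun k hk => ?_⟩
    have hk' : |t| + r + 1 ≤ (k:ℝ) := le_trans (Nat.le_ceil _) (Nat.cast_le.2 hk)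
    have h1 := hAkk k
    have h2 := hBkk k
    constructor
    · linarith [neg_abs_le t]
    · linarith [le_abs_self t]
  have hrad : ∀ (t : ℝ) (k : ℕ), -Ak k ≤ t → t ≤ Bk k →
      dist x (σ k t) ≤ |t| + r + 1 + 4 * δ := by
    intro t k h1 h2
    rw [hσin k t h1 h2]
    have hA0 : -Ak k ≤ (0:ℝ) := by linarith [hAk0 k]
    have hd : dist (c k (Ak k)) (c k (t + Ak k)) = |t| := by
      rw [hciso k (Ak k) (by simpa using hmemIcc k 0 hA0 (hBk0 k)) (t + Ak k)
        (hmemIcc k t h1 h2),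
        show Ak k - (t + Ak k) = -t by ring, abs_neg]
    have h3 := E0 k
    have h4 := hRkr1 k
    calc dist x (c k (t + Ak k)) ≤ dist x (c k (Ak k)) + dist (c k (Ak k)) (c k (t + Ak k)) :=
          dist_triangle _ _ _
      _ ≤ |t| + r + 1 + 4 * δ := by rw [hd]; linarith
  obtain ⟨U, hU⟩ := Ultrafilter.exists_le (atTop : Filter ℕ)
  have hUev : ∀ {p : ℕ → Prop}, (∀ᶠ k in atTop, p k) → ∀ᶠ k in (U : Filter ℕ), p k :=
    fun h => hU h
  have key : ∀ t : ℝ, ∃ p : Y, Tendsto (fun k => σ k t) (U : Filter ℕ) (𝓝 p) := by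
    intro t
    have hball : ∀ᶠ k in (U : Filter ℕ), σ k t ∈ Metric.closedBall x (|t| + r + 1 + 4*δ) := by
      apply hUev
      filter_upwards [hdom t] with k hk
      exact Metric.mem_closedBall.2 (by rw [dist_comm]; exact hrad t k hk.1 hk.2)
    have hcpt : IsCompact (Metric.closedBall x (|t| + r + 1 + 4*δ)) :=
      isCompact_closedBall x _
    obtain ⟨p, _, hp⟩ := hcpt.ultrafilter_le_nhds (U.map (fun k => σ k t))
      (by rw [Ultrafilter.coe_map, le_principal_iff, mem_map]; exact hball)
    exact ⟨p, by rw [Tendsto, ← Ultrafilter.coe_map]; exact hp⟩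
  choose γ hγ using key
  have hgl : IsGeodLine γ := by
    intro s t
    have hds : Tendsto (fun k => dist (σ k s) (σ k t)) (U : Filter ℕ)
        (𝓝 (dist (γ s) (γ t))) := (hγ s).dist (hγ t)
    have hev : ∀ᶠ k in (U : Filter ℕ), dist (σ k s) (σ k t) = |s - t| := by
      apply hUev
      filter_upwards [hdom s, hdom t] with k hks hkt
      rw [hσin k s hks.1 hks.2, hσin k t hkt.1 hkt.2,
        hciso k (s + Ak k) (hmemIcc k s hks.1 hks.2) (t + Ak k) (hmemIcc k t hkt.1 hkt.2)]
      congr 1; ring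
    have h2 : Tendsto (fun k => dist (σ k s) (σ k t)) (U : Filter ℕ) (𝓝 |s - t|) :=
      Tendsto.congr' (by filter_upwards [hev] with k h; exact h.symm) tendsto_const_nhds
    exact tendsto_nhds_unique hds h2
  have hbd : ∀ t : ℝ, 0 ≤ t → dist (ξ t) (γ t) ≤ r + 4 * δ := by
    intro t ht
    have hdt : Tendsto (fun k => dist (ξ t) (σ k t)) (U : Filter ℕ)
        (𝓝 (dist (ξ t) (γ t))) := tendsto_const_nhds.dist (hγ t)
    refine le_of_forall_pos_le_add ?_
    intro ε hε
    have hevk : ∀ᶠ (k : ℕ) in atTop, 1/((k:ℝ)+1) ≤ ε := by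
      rw [eventually_atTop]
      refine ⟨⌈1/ε⌉₊, fun k hk => ?_⟩
      have h1 : 1/ε ≤ (k:ℝ) := le_trans (Nat.le_ceil _) (Nat.cast_le.2 hk)
      rw [div_le_iff₀ (by positivity)]
      rw [div_le_iff₀ hε] at h1
      nlinarith [Nat.cast_nonneg (α := ℝ) k]
    have hev : ∀ᶠ k in (U : Filter ℕ), dist (ξ t) (σ k t) ≤ r + 4*δ + ε := by
      apply hUev
      filter_upwards [hdom t, hevk] with k hk hke
      rw [hσin k t hk.1 hk.2]
      have e1 := E1 k t ht hk.2
      have e2 : dist (ξ t) (ξ (t + Rk k)) = Rk k := by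
        rw [hξ.2 t (t + Rk k) ht (by linarith [hRk0 k]),
          abs_of_nonpos (by linarith [hRk0 k])]
        ring
      have e3 := hRkr k
      calc dist (ξ t) (c k (t + Ak k))
          ≤ dist (ξ t) (ξ (t + Rk k)) + dist (ξ (t + Rk k)) (c k (t + Ak k)) :=
            dist_triangle _ _ _
        _ ≤ r + 4*δ + ε := by rw [e2]; linarith
    exact le_of_tendsto hdt hev
  have hfwd : SeqEquiv x (fun n : ℕ => γ n) (fun n : ℕ => ξ n) := by
    rw [seqEquiv_iff]
    intro M
    obtain ⟨N, hN⟩ := seqEquiv_iff.1 (ray_gromovSeq x ξ hξ) (M + (r + 4*δ))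
    refine ⟨N, fun n m hn hm => ?_⟩
    have h1 := hN n m hn hm
    have h2 := gromovProd_sub_le x (ξ (n:ℕ)) (γ (n:ℕ)) (ξ (m:ℕ))
    have h3 := hbd (n:ℕ) (Nat.cast_nonneg n)
    linarith
  have hbwd : SeqEquiv x (fun n : ℕ => γ (-(n:ℝ))) v := by
    rw [seqEquiv_iff]
    intro M
    obtain ⟨N₁, hN₁⟩ := seqEquiv_iff.1 hv (M + δ)
    refine ⟨max N₁ ⌈M + 3*δ + 3⌉₊, fun n m hn hm => ?_⟩
    have hnM : M + 3*δ + 3 ≤ (n : ℝ) :=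
      le_trans (Nat.le_ceil _) (Nat.cast_le.2 (le_trans (le_max_right _ _) hn))
    have hmN : N₁ ≤ m := le_trans (le_max_left _ _) hm
    have h1 : ∀ᶠ k in (U : Filter ℕ), dist (σ k (-(n:ℝ))) (γ (-(n:ℝ))) < 1 :=
      Metric.tendsto_nhds.mp (hγ (-(n:ℝ))) 1 one_pos
    have h2 : ∀ᶠ k in (U : Filter ℕ), N₁ ≤ k ∧ (n:ℝ) ≤ k := by
      apply hUev
      rw [eventually_atTop]
      exact ⟨max N₁ n, fun k hk => ⟨le_trans (le_max_left _ _) hk,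
        Nat.cast_le.2 (le_trans (le_max_right _ _) hk)⟩⟩
    have h3 : ∀ᶠ k in (U : Filter ℕ), -Ak k ≤ -(n:ℝ) ∧ -(n:ℝ) ≤ Bk k :=
      hUev (hdom (-(n:ℝ)))
    obtain ⟨k, hk1, ⟨hkN₁, hkn⟩, hkd1, hkd2⟩ := (h1.and (h2.and h3)).exists
    -- distance computations along the geodesic
    have hin : σ k (-(n:ℝ)) = c k (-(n:ℝ) + Ak k) := hσin k _ hkd1 hkd2
    have e1 : dist (σ k (-(n:ℝ))) (c k (Ak k)) = (n:ℝ) := by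
      rw [hin, hciso k _ (hmemIcc k _ hkd1 hkd2) (Ak k)
        (by simpa using hmemIcc k 0 (by linarith [hAk0 k]) (hBk0 k)),
        show -(n:ℝ) + Ak k - Ak k = -(n:ℝ) by ring, abs_neg,
        abs_of_nonneg (Nat.cast_nonneg n)]
    have e2 : (n:ℝ) - (Rk k + 4*δ) ≤ dist x (σ k (-(n:ℝ))) := by
      have htri := dist_triangle (σ k (-(n:ℝ))) x (c k (Ak k))
      have hE0 := E0 k
      rw [e1] at htri
      rw [dist_comm]
      linarith
    have e3 : dist (σ k (-(n:ℝ))) (v (mm k)) = Ak k - (n:ℝ) := by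
      rw [hin, ← hc0 k, dist_comm,
        hciso k 0 (by constructor <;> [exact le_rfl; exact dist_nonneg])
          (-(n:ℝ) + Ak k) (hmemIcc k _ hkd1 hkd2),
        show (0:ℝ) - (-(n:ℝ) + Ak k) = (n:ℝ) - Ak k by ring]
      rw [abs_of_nonpos (by linarith [hkd1])]
      ring
    have e4 : dist x (v (mm k)) = Ak k + Rk k := by rw [hAk k]; ring
    have p1 : (n:ℝ) - 2*δ - 1/2 ≤ gromovProd x (σ k (-(n:ℝ))) (v (mm k)) := by
      unfold gromovProd
      rw [e3, e4]
      have := hRk0 k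
      linarith [e2]
    have p2 : (n:ℝ) - 2*δ - 1 - 1/2 ≤ gromovProd x (γ (-(n:ℝ))) (v (mm k)) := by
      have hsub := gromovProd_sub_le x (σ k (-(n:ℝ))) (γ (-(n:ℝ))) (v (mm k))
      linarith [hk1, p1]
    have p3 : M + δ ≤ gromovProd x (v (mm k)) (v m) :=
      hN₁ (mm k) m (le_trans hkN₁ (hkm k)) hmN
    have hpiv := hyp (γ (-(n:ℝ))) (v (mm k)) (v m) x
    have hmin : M + δ ≤ min (gromovProd x (γ (-(n:ℝ))) (v (mm k)))
        (gromovProd x (v (mm k)) (v m)) := by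
      refine le_min (by linarith) p3
    linarith
  exact ⟨γ, hgl, hfwd, hbwd, fun t ht => le_trans (hbd t ht) (by linarith)⟩

end Construction
section Hull
variable {Y : Type*} [MetricSpace Y]

/-- Lower bound for the distance from `x` to any point of the hull. -/
theorem hull_dist_lb {δ : ℝ} (hδ : 0 ≤ δ) (hyp : IsDeltaHyperbolic Y δ)
    (x : Y) (C : Set (ℕ → Y)) (hC : ∀ u ∈ C, GromovSeq x u)
    (u : ℕ → Y) (hu : u ∈ C) (R : ℝ)
    (hR : ∀ w ∈ C, ¬ SeqEquiv x u w → R ≤ ell x u w)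
    (y : Y) (hy : y ∈ qcHull x C) : R - 2 * δ ≤ dist x y := by
  obtain ⟨γ, hγ, ⟨⟨a, ha, hfa⟩, ⟨b, hb, hfb⟩⟩, ⟨s, rfl⟩⟩ := hy
  -- the two end sequences
  -- key upper bound: Gromov products of points on the two ends are ≤ dist x (γ s)
  have hub : ∀ n m : ℕ, (s ≤ n) → (-(m:ℝ) ≤ s) →
      gromovProd x (γ (n:ℝ)) (γ (-(m:ℝ))) ≤ dist x (γ s) := by
    intro n m hns hms
    apply gromovProd_le_of_between
    rw [hγ (n:ℝ) s, hγ s (-(m:ℝ)), hγ (n:ℝ) (-(m:ℝ)),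
      abs_of_nonneg (by linarith : (0:ℝ) ≤ (n:ℝ) - s),
      abs_of_nonneg (by linarith : (0:ℝ) ≤ s - -(m:ℝ)),
      abs_of_nonneg (by linarith : (0:ℝ) ≤ (n:ℝ) - -(m:ℝ))]
    ring
  -- lower bound on products of far points of the two ends
  refine le_of_forall_pos_le_add ?_
  intro ε hε
  -- (u p | fwd n) is eventually ≥ R - ε/2 - δ  (or arbitrarily large)
  have hend : ∀ (e : ℕ → Y), e ∈ C → ∀ (f : ℕ → Y), SeqEquiv x f e →
      ∃ P : ℕ, ∀ p n : ℕ, P ≤ p → P ≤ n →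
        R - ε/2 - δ ≤ gromovProd x (u p) (f n) := by
    intro e he f hf
    by_cases hcase : SeqEquiv x u e
    · -- then u ~ f, products tend to infinity
      have : SeqEquiv x u f := seqEquiv_trans hyp hcase (seqEquiv_symm hf)
      obtain ⟨P, hP⟩ := seqEquiv_iff.1 this (R - ε/2 - δ)
      exact ⟨P, fun p n hp hn => hP p n hp hn⟩
    · -- then R ≤ ell x u e
      have hRe : R ≤ ell x u e := hR e he hcase
      have hlow : R - ε/2 < ell x u e := by linarith
      obtain ⟨N, hN⟩ := high_of_lt_ell hlow
      obtain ⟨N', hN'⟩ := seqEquiv_iff.1 hf (R - ε/2)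
      refine ⟨max N N', fun p n hp hn => ?_⟩
      set q₀ : ℕ := max N N' with hq₀
      have e1 : R - ε/2 ≤ gromovProd x (u p) (e q₀) :=
        le_of_lt (hN p q₀ (le_trans (le_max_left _ _) hp) (le_max_left _ _))
      have e2 : R - ε/2 ≤ gromovProd x (e q₀) (f n) := by
        rw [gromovProd_comm]
        exact hN' n q₀ (le_trans (le_max_right _ _) hn) (le_max_right _ _)
      have hpiv := hyp (u p) (e q₀) (f n) x
      have := le_min e1 e2
      linarith
  obtain ⟨P₁, hP₁⟩ := hend a ha _ hfa
  obtain ⟨P₂, hP₂⟩ := hend b hb _ hfb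
  -- choose n, m large
  obtain ⟨ns, hns⟩ := exists_nat_ge s
  obtain ⟨ms, hms⟩ := exists_nat_ge (-s)
  set n : ℕ := max ns (max P₁ (max P₂ 1)) with hn
  set m : ℕ := max ms (max P₁ (max P₂ 1)) with hm
  have hn1 : s ≤ (n:ℝ) := le_trans hns (Nat.cast_le.2 (le_max_left _ _))
  have hm1 : -(m:ℝ) ≤ s := by
    have : -s ≤ (m:ℝ) := le_trans hms (Nat.cast_le.2 (le_max_left _ _))
    linarith
  have e1 : R - ε/2 - δ ≤ gromovProd x (u (max P₁ P₂)) (γ (n:ℝ)) :=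
    hP₁ (max P₁ P₂) n (le_max_left _ _) (by rw [hn]; omega)
  have e2 : R - ε/2 - δ ≤ gromovProd x (u (max P₁ P₂)) (γ (-(m:ℝ))) :=
    hP₂ (max P₁ P₂) m (le_max_right _ _) (by rw [hm]; omega)
  have hpiv := hyp (γ (n:ℝ)) (u (max P₁ P₂)) (γ (-(m:ℝ))) x
  have e1' : R - ε/2 - δ ≤ gromovProd x (γ (n:ℝ)) (u (max P₁ P₂)) := by
    rw [gromovProd_comm]; exact e1
  have hub' := hub n m hn1 hm1
  have := le_min e1' e2
  linarith
end Hull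
section Attain
open Topology
variable {Y : Type*} [MetricSpace Y] [ProperSpace Y]

theorem ell_attain {δ : ℝ} (hδ : 0 ≤ δ) (hyp : IsDeltaHyperbolic Y δ)
    (hgeo : IsGeodesicSpace Y) (x : Y) (u : ℕ → Y)
    (S : Set (ℕ → Y)) (hSne : S.Nonempty) (hSG : ∀ w ∈ S, GromovSeq x w)
    (hSnot : ∀ w ∈ S, ¬ SeqEquiv x u w) :
    ∃ w ∈ S, ell x u w ≤ sInf (ell x u '' S) + δ := by
  have hIne : (ell x u '' S).Nonempty := hSne.image _
  have hIbdd : BddBelow (ell x u '' S) := by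
    refine ⟨0, fun a ha => ?_⟩
    obtain ⟨w, hw, rfl⟩ := ha
    exact ell_nonneg (hSnot w hw)
  set R : ℝ := sInf (ell x u '' S) with hRdef
  have hR0 : 0 ≤ R := le_csInf hIne (fun a ha => by
    obtain ⟨w, hw, rfl⟩ := ha; exact ell_nonneg (hSnot w hw))
  rcases eq_or_lt_of_le hδ with heq | hpos
  · -- δ = 0 : exact attainment via properness
    subst heq
    by_contra hcon
    push_neg at hcon
    have hgt : ∀ w ∈ S, R < ell x u w := by
      intro w hw
      have := hcon w hw
      linarith
    -- recursive halving sequence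
    have hstep : ∀ w : ℕ → Y, w ∈ S → ∃ w' : ℕ → Y, w' ∈ S ∧
        ell x u w' < R + (ell x u w - R)/2 := by
      intro w hw
      have hp : 0 < (ell x u w - R)/2 := by linarith [hgt w hw]
      obtain ⟨a, ha, hlt⟩ := Real.lt_sInf_add_pos hIne hp
      obtain ⟨w', hw', rfl⟩ := ha
      exact ⟨w', hw', hlt⟩
    choose stepF hstepS hstepLt using hstep
    obtain ⟨a0, ha0, hlt0⟩ := Real.lt_sInf_add_pos hIne (by norm_num : (0:ℝ) < 1/4)
    obtain ⟨w₀, hw₀, hw₀eq⟩ := ha0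
    have hf : ∃ f : ℕ → {w : ℕ → Y // w ∈ S},
        f 0 = ⟨w₀, hw₀⟩ ∧ ∀ j, f (j+1) = ⟨stepF (f j).1 (f j).2, hstepS (f j).1 (f j).2⟩ :=
      ⟨fun j => Nat.rec ⟨w₀, hw₀⟩ (fun _ p => ⟨stepF p.1 p.2, hstepS p.1 p.2⟩) j,
        rfl, fun j => rfl⟩
    obtain ⟨f, hf0, hfS⟩ := hf
    set ℓ : ℕ → ℝ := fun j => ell x u (f j).1 with hℓdef
    have hg : ∀ j, 0 < ℓ j - R := fun j => by
      have := hgt (f j).1 (f j).2; simp only [hℓdef]; linarith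
    have hhalf : ∀ j, ℓ (j+1) < R + (ℓ j - R)/2 := by
      intro j
      have := hstepLt (f j).1 (f j).2
      simp only [hℓdef, hfS j]
      exact this
    have hℓ0 : ℓ 0 < R + 1/4 := by
      simp only [hℓdef, hf0]
      rw [hw₀eq]; exact hlt0
    have hmono : ∀ i j : ℕ, i < j → ℓ j - R < (ℓ i - R)/2 := by
      intro i j hij
      induction j with
      | zero => omega
      | succ j ih =>
        rcases Nat.lt_succ_iff_lt_or_eq.mp hij with h | h
        · have h1 := ih h
          have h2 := hhalf j
          have h3 := hg i
          linarith
        · subst h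
          have := hhalf i
          linarith
    have hsmall : ∀ j, ℓ j - R < 1/4 := by
      intro j
      cases Nat.eq_zero_or_pos j with
      | inl h => subst h; linarith [hℓ0]
      | inr h =>
        have := hmono 0 j h
        have := hg 0
        linarith [hℓ0]
    -- quantitative eventual lower bounds and frequent upper bounds
    have hhigh : ∀ j : ℕ, ∃ N : ℕ, ∀ p q : ℕ, N ≤ p → N ≤ q →
        ℓ j - (ℓ j - R)/4 < gromovProd x (u p) ((f j).1 q) := by
      intro j
      exact high_of_lt_ell (by have := hg j; simp only [hℓdef]; linarith)
    choose N hN using hhigh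
    have hfarj : ∀ j : ℕ, ∃ Nf : ℕ, ∀ q : ℕ, Nf ≤ q → R + 3 ≤ dist x ((f j).1 q) :=
      fun j => gromovSeq_dist_ge (hSG (f j).1 (f j).2) (R + 3)
    choose Nf hNf using hfarj
    have hsel : ∀ j : ℕ, ∃ p q : ℕ, ((Finset.range (j+1)).sup N ≤ p) ∧
        (max (Nf j) (N j) ≤ q) ∧
        gromovProd x (u p) ((f j).1 q) ≤ ℓ j + (ℓ j - R)/4 := by
      intro j
      have hεp : (0:ℝ) < (ℓ j - R)/4 := by have := hg j; linarith
      have hmem := lowSet_ell_add (hSnot (f j).1 (f j).2) hεp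
      obtain ⟨p, q, hp, hq, hpq⟩ := hmem (max ((Finset.range (j+1)).sup N) (max (Nf j) (N j)))
      exact ⟨p, q, le_trans (le_max_left _ _) hp, le_trans (le_max_right _ _) hq, hpq⟩
    choose pj qj hpj hqj hprodj using hsel
    set w : ℕ → Y := fun j => (f j).1 (qj j) with hwdef
    have hwfar : ∀ j, R + 3 ≤ dist x (w j) := fun j =>
      hNf j (qj j) (le_trans (le_max_left _ _) (hqj j))
    have horder : ∀ i j : ℕ, i < j → ℓ j + (ℓ j - R)/4 < ℓ i - (ℓ i - R)/4 := by
      intro i j hij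
      have h1 := hmono i j hij
      have h2 := hg i
      have h3 := hg j
      linarith
    have hpair : ∀ i j : ℕ, i < j → gromovProd x (w i) (w j) ≤ R + 1 := by
      intro i j hij
      have e1 : gromovProd x (u (pj j)) (w j) ≤ ℓ j + (ℓ j - R)/4 := hprodj j
      have e2 : ℓ i - (ℓ i - R)/4 < gromovProd x (u (pj j)) (w i) := by
        apply hN i (pj j) (qj i)
        · exact le_trans (Finset.le_sup (Finset.mem_range.2 (by omega))) (hpj j)
        · exact le_trans (le_max_right _ _) (hqj i)
      have hpiv := hyp (u (pj j)) (w i) (w j) x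
      rw [sub_zero] at hpiv
      have hmle : min (gromovProd x (u (pj j)) (w i)) (gromovProd x (w i) (w j)) ≤
          ℓ j + (ℓ j - R)/4 := le_trans hpiv e1
      have hord := horder i j hij
      rcases min_le_iff.1 hmle with h | h
      · linarith
      · have hj := hg j
        have := hsmall j
        linarith
    -- geodesics from x to the w j, points at distance R + 2
    have hgc : ∀ j : ℕ, ∃ c : ℝ → Y, c 0 = x ∧ c (dist x (w j)) = w j ∧
        ∀ s ∈ Set.Icc (0:ℝ) (dist x (w j)), ∀ t ∈ Set.Icc (0:ℝ) (dist x (w j)),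
          dist (c s) (c t) = |s - t| := fun j => hgeo x (w j)
    choose c hc0 hcL hciso using hgc
    set q : ℕ → Y := fun j => c j (R + 2) with hqdef
    have hmem2 : ∀ j, (R + 2 : ℝ) ∈ Set.Icc (0:ℝ) (dist x (w j)) :=
      fun j => ⟨by linarith, by linarith [hwfar j]⟩
    have hmem0 : ∀ j, (0 : ℝ) ∈ Set.Icc (0:ℝ) (dist x (w j)) :=
      fun j => ⟨le_rfl, dist_nonneg⟩
    have hmemL : ∀ j, dist x (w j) ∈ Set.Icc (0:ℝ) (dist x (w j)) :=
      fun j => ⟨dist_nonneg, le_rfl⟩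
    have hdq : ∀ j, dist x (q j) = R + 2 := by
      intro j
      rw [hqdef]
      conv_lhs => rw [← hc0 j]
      rw [hciso j 0 (hmem0 j) (R+2) (hmem2 j), abs_of_nonpos (by linarith)]
      ring
    have hqw : ∀ j, gromovProd x (q j) (w j) = R + 2 := by
      intro j
      have hbet : dist x (q j) + dist (q j) (w j) = dist x (w j) := by
        have h1 : dist (q j) (w j) = dist x (w j) - (R + 2) := by
          rw [hqdef]
          conv_lhs => rw [← hcL j]
          rw [hciso j (R+2) (hmem2 j) (dist x (w j)) (hmemL j),
            abs_of_nonpos (by linarith [hwfar j])]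
          ring
        rw [hdq j, h1]; ring
      rw [← hdq j]
      exact gromovProd_of_between x (q j) (w j) hbet
    have hqsep : ∀ i j : ℕ, i < j → gromovProd x (q i) (q j) ≤ R + 1 := by
      intro i j hij
      by_contra hgt'
      push_neg at hgt'
      have s1 : R + 1 < gromovProd x (q i) (w j) := by
        have hpiv := hyp (q i) (q j) (w j) x
        rw [sub_zero] at hpiv
        have : R + 1 < min (gromovProd x (q i) (q j)) (gromovProd x (q j) (w j)) :=
          lt_min hgt' (by rw [hqw j]; linarith)
        linarith
      have s2 : R + 1 < gromovProd x (w i) (w j) := by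
        have hpiv := hyp (w i) (q i) (w j) x
        rw [sub_zero] at hpiv
        have hwq : gromovProd x (w i) (q i) = R + 2 := by
          rw [gromovProd_comm]; exact hqw i
        have : R + 1 < min (gromovProd x (w i) (q i)) (gromovProd x (q i) (w j)) :=
          lt_min (by rw [hwq]; linarith) s1
        linarith
      exact absurd (hpair i j hij) (not_le.2 s2)
    have hdsep : ∀ i j : ℕ, i ≠ j → 2 ≤ dist (q i) (q j) := by
      intro i j hij
      have key : ∀ a b : ℕ, a < b → 2 ≤ dist (q a) (q b) := by
        intro a b hab
        have h1 := hqsep a b hab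
        have h2 : gromovProd x (q a) (q b) =
            (dist x (q a) + dist x (q b) - dist (q a) (q b))/2 := rfl
        rw [hdq a, hdq b] at h2
        linarith [h2 ▸ h1]
      rcases lt_or_gt_of_ne hij with h | h
      · exact key i j h
      · rw [dist_comm]; exact key j i h
    -- properness contradiction
    have hqball : ∀ j, q j ∈ Metric.closedBall x (R + 2) := fun j =>
      Metric.mem_closedBall.2 (by rw [dist_comm, hdq j])
    have htb : TotallyBounded (Metric.closedBall x (R + 2)) :=
      (isCompact_closedBall x (R + 2)).totallyBounded
    obtain ⟨t, htfin, htcov⟩ := Metric.totallyBounded_iff.1 htb 1 one_pos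
    have hcov : ∀ j : ℕ, ∃ y, y ∈ t ∧ q j ∈ Metric.ball y 1 := by
      intro j
      have := htcov (hqball j)
      simpa using this
    choose Yc hYt hYmem using hcov
    haveI : Finite ↥t := htfin.to_subtype
    obtain ⟨i, j, hij, hFeq⟩ :=
      Finite.exists_ne_map_eq_of_infinite (fun j : ℕ => (⟨Yc j, hYt j⟩ : ↥t))
    have hYeq : Yc i = Yc j := congrArg Subtype.val hFeq
    have d1 : dist (q i) (Yc i) < 1 := Metric.mem_ball.1 (hYmem i)
    have d2 : dist (q j) (Yc j) < 1 := Metric.mem_ball.1 (hYmem j)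
    have : dist (q i) (q j) < 2 := by
      calc dist (q i) (q j) ≤ dist (q i) (Yc i) + dist (Yc i) (q j) := dist_triangle _ _ _
        _ = dist (q i) (Yc i) + dist (q j) (Yc j) := by
            rw [hYeq, dist_comm (Yc j) (q j)]
        _ < 2 := by linarith
    exact absurd (hdsep i j hij) (not_le.2 this)
  · obtain ⟨a, ha, hlt⟩ := Real.lt_sInf_add_pos hIne hpos
    obtain ⟨w, hw, rfl⟩ := ha
    exact ⟨w, hw, le_of_lt hlt⟩

end Attain


/-- Let `X` be a proper `δ`-hyperbolic geodesic space, `x ∈ X`, and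
`C ⊆ ∂X` with at least two points. Then for every `z ∈ C` and every geodesic ray
`ξ = ξ_{xz}` from `x` to `z` there exists a geodesic line `γ` with both endpoints in `C`
such that `d(ξ(t), γ(t)) ≤ 22δ + d(x, QC-Hull(C))` for every `t ≥ 0`. -/
theorem ray_close_to_line_in_hull {X : Type*} [MetricSpace X] [ProperSpace X]
    (δ : ℝ) (hδ : 0 ≤ δ) (hyp : IsDeltaHyperbolic X δ) (hgeo : IsGeodesicSpace X)
    (x : X) (C : Set (ℕ → X)) (hC : ∀ u ∈ C, GromovSeq x u)
    (htwo : ∃ u ∈ C, ∃ v ∈ C, ¬ SeqEquiv x u v) :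
    ∀ u ∈ C, ∀ ξ : ℝ → X, IsRay x ξ → SeqEquiv x (fun n => ξ n) u →
      ∃ γ : ℝ → X, IsGeodLine γ ∧ EndsIn x C γ ∧
        ∀ t : ℝ, 0 ≤ t →
          dist (ξ t) (γ t) ≤ 22 * δ + Metric.infDist x (qcHull x C) := by
  intro u hu ξ hξ hξu
  -- the set of boundary points inequivalent to u
  set S : Set (ℕ → X) := {w ∈ C | ¬ SeqEquiv x u w} with hSdef
  have hSsub : S ⊆ C := fun w hw => hw.1
  have hSnot : ∀ w ∈ S, ¬ SeqEquiv x u w := fun w hw => hw.2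
  have hSG : ∀ w ∈ S, GromovSeq x w := fun w hw => hC w (hSsub hw)
  have hSne : S.Nonempty := by
    obtain ⟨a, ha, b, hb, hab⟩ := htwo
    by_cases hua : SeqEquiv x u a
    · by_cases hub : SeqEquiv x u b
      · exact absurd (seqEquiv_trans hyp (seqEquiv_symm hua) hub) hab
      · exact ⟨b, hb, hub⟩
    · exact ⟨a, ha, hua⟩
  -- inequivalent to u means inequivalent to the ray sequence
  have hnotξ : ∀ w ∈ S, ¬ SeqEquiv x (fun n : ℕ => ξ n) w := by
    intro w hw hcon
    exact hSnot w hw (seqEquiv_trans hyp (seqEquiv_symm hξu) hcon)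
  -- near-minimizer of ell over S
  set R : ℝ := sInf (ell x u '' S) with hRdef
  obtain ⟨w, hwS, hwmin⟩ := ell_attain hδ hyp hgeo x u S hSne hSG hSnot
  -- transfer the `ell` value to the ray sequence
  have htrans : ell x (fun n : ℕ => ξ n) w ≤ ell x u w + δ := by
    refine le_of_forall_pos_le_add ?_
    intro ε hε
    have hmem : ell x u w + ε ∈ LowSet x u w := lowSet_ell_add (hSnot w hwS) hε
    have hmem2 : ell x u w + ε + δ ∈ LowSet x (fun n : ℕ => ξ n) w := by
      intro N
      obtain ⟨N₀, hN₀⟩ := seqEquiv_iff.1 hξu (ell x u w + ε + δ + 1)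
      obtain ⟨n, m, hn, hm, hp⟩ := hmem (max N N₀)
      refine ⟨max N N₀, m, le_max_left _ _, le_trans (le_max_left _ _) hm, ?_⟩
      have hpiv := hyp (u n) (ξ (max N N₀ : ℕ)) (w m) x
      have h1 : ell x u w + ε + δ + 1 ≤
          gromovProd x (u n) (ξ (max N N₀ : ℕ)) := by
        rw [gromovProd_comm]
        exact hN₀ (max N N₀) n (le_max_right _ _) (le_trans (le_max_right _ _) hn)
      by_contra hcon
      push_neg at hcon
      have hmin : ell x u w + ε + δ < min (gromovProd x (u n) (ξ (max N N₀ : ℕ)))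
          (gromovProd x (ξ (max N N₀ : ℕ)) (w m)) := lt_min (by linarith) hcon
      linarith
    have := ell_le hmem2
    linarith
  -- construct the line
  obtain ⟨γ, hγline, hγfwd, hγbwd, hγbd⟩ :=
    line_construction hδ hyp hgeo x ξ hξ w (hSG w hwS) (hnotξ w hwS)
  have hends : EndsIn x C γ :=
    ⟨⟨u, hu, seqEquiv_trans hyp hγfwd hξu⟩, ⟨w, hSsub hwS, hγbwd⟩⟩
  refine ⟨γ, hγline, hends, ?_⟩
  -- the hull is nonempty
  have hhne : (qcHull x C).Nonempty := ⟨γ 0, γ, hγline, hends, 0, rfl⟩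
  -- lower bound on the distance to the hull
  have hlb : R - 2 * δ ≤ Metric.infDist x (qcHull x C) := by
    by_contra hcon
    push_neg at hcon
    obtain ⟨y, hy, hylt⟩ := (Metric.infDist_lt_iff hhne).1 hcon
    suffices h : R - 2 * δ ≤ dist x y by linarith
    revert hy
    intro hy
    refine hull_dist_lb hδ hyp x C hC u hu R ?_ y hy
    intro w' hw' hnw'
    have hbdd : BddBelow (ell x u '' S) := by
      refine ⟨0, fun a ha => ?_⟩
      obtain ⟨w'', hw'', rfl⟩ := ha
      exact ell_nonneg (hSnot w'' hw'')
    exact csInf_le hbdd ⟨w', ⟨hw', hnw'⟩, rfl⟩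
  -- assemble the final estimate
  intro t ht
  have h1 := hγbd t ht
  have h2 := htrans
  have h3 := hwmin
  rw [← hRdef] at h3
  linarith
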